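/- arXiv:2403.06224 — 4 statements merged into one kernel-verified Lean document; each statement's English description precedes it below -/
import Mathlib

section
/- For the dissipative ladder under periodic boundary conditions, the plane-wave state ψ = (1/√L) ∑_{x=1}^{L} e^{ikx} |x,A⟩ supported on the A chain is an eigenstate of the full Hamiltonian with real eigenvalue E = t_p cos(k - φ) if and only if the connection condition ∑_{m=0}^{n} t_m cos(mk) = 0 holds, where k ∈ (2π/L)ℤ. -/
open Complex Matrix Finset

/-- The dissipative ladder Hamiltonian under PBC. Sites are indexed by `ZMod L × Bool`,
with `(x, false) = |x,A⟩` and `(x, true) = |x,B⟩`.  Intrachain hopping on each chain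
carries the Peierls phase: `(t_p/2) e^{iφ} |x+1,·⟩⟨x,·| + h.c.`; interchain couplings are
`(t_m/2)(|x+m,B⟩⟨x,A| + |x-m,B⟩⟨x,A|) + h.c.` for `m = 0,…,n`; and each B site has the
onsite dissipation `-iγ_x |x,B⟩⟨x,B|`. -/
noncomputable def ladderH (L n : ℕ) [NeZero L] (tp φ : ℝ) (t : ℕ → ℝ) (γ : ZMod L → ℝ) :
    Matrix (ZMod L × Bool) (ZMod L × Bool) ℂ :=
  fun p q =>
    match p, q with
    | (x, false), (y, false) =>
        (if x = y + 1 then (tp / 2 : ℂ) * Complex.exp (Complex.I * φ) else 0)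
          + (if y = x + 1 then (tp / 2 : ℂ) * Complex.exp (-Complex.I * φ) else 0)
    | (x, true), (y, true) =>
        (if x = y + 1 then (tp / 2 : ℂ) * Complex.exp (Complex.I * φ) else 0)
          + (if y = x + 1 then (tp / 2 : ℂ) * Complex.exp (-Complex.I * φ) else 0)
          + (if x = y then -Complex.I * (γ x : ℂ) else 0)
    | (x, true), (y, false) =>
        ∑ m ∈ Finset.range (n + 1),
          (t m / 2 : ℂ) * ((if x = y + (m : ZMod L) then 1 else 0)
            + (if x = y - (m : ZMod L) then 1 else 0))
    | (x, false), (y, true) =>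
        ∑ m ∈ Finset.range (n + 1),
          (t m / 2 : ℂ) * ((if y = x + (m : ZMod L) then 1 else 0)
            + (if y = x - (m : ZMod L) then 1 else 0))

/-- A-row of the ladder Hamiltonian applied to an A-chain-supported vector. -/
lemma ladderH_mulVec_A (L n : ℕ) [NeZero L] (tp φ : ℝ) (t : ℕ → ℝ) (γ : ZMod L → ℝ)
    (v : ZMod L → ℂ) (ψ : ZMod L × Bool → ℂ)
    (hψ : ψ = fun p => if p.2 = false then v p.1 else 0) (x : ZMod L) :
    (ladderH L n tp φ t γ).mulVec ψ (x, false) =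
      (tp / 2 : ℂ) * Complex.exp (Complex.I * φ) * v (x - 1)
        + (tp / 2 : ℂ) * Complex.exp (-Complex.I * φ) * v (x + 1) := by
  subst hψ
  simp only [Matrix.mulVec, dotProduct, Fintype.sum_prod_type, Fintype.sum_bool, ladderH]
  simp only [if_neg (by simp : ¬(true = false)), if_pos rfl, mul_zero, zero_add, add_mul,
    ite_mul, zero_mul]
  rw [Finset.sum_add_distrib]
  have h1 : ∀ y : ZMod L, (x = y + 1) = (y = x - 1) := by
    intro y; apply propext
    constructor
    · intro h; rw [h]; ring
    · intro h; rw [h]; ring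
  simp_rw [h1]
  rw [Finset.sum_ite_eq' Finset.univ (x - 1), Finset.sum_ite_eq' Finset.univ (x + 1)]
  simp

/-- B-row of the ladder Hamiltonian applied to an A-chain-supported vector. -/
lemma ladderH_mulVec_B (L n : ℕ) [NeZero L] (tp φ : ℝ) (t : ℕ → ℝ) (γ : ZMod L → ℝ)
    (v : ZMod L → ℂ) (ψ : ZMod L × Bool → ℂ)
    (hψ : ψ = fun p => if p.2 = false then v p.1 else 0) (x : ZMod L) :
    (ladderH L n tp φ t γ).mulVec ψ (x, true) =
      ∑ m ∈ Finset.range (n + 1),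
        (t m / 2 : ℂ) * (v (x - (m : ZMod L)) + v (x + (m : ZMod L))) := by
  subst hψ
  simp only [Matrix.mulVec, dotProduct, Fintype.sum_prod_type, Fintype.sum_bool, ladderH]
  simp only [if_neg (by simp : ¬(true = false)), if_pos rfl, mul_zero, zero_add]
  simp only [if_true]
  simp_rw [Finset.sum_mul]
  rw [Finset.sum_comm]
  refine Finset.sum_congr rfl fun m _ => ?_
  have h1 : ∀ y : ZMod L, (x = y + (m : ZMod L)) = (y = x - (m : ZMod L)) := by
    intro y; apply propext
    constructor
    · intro h; rw [h]; ring
    · intro h; rw [h]; ring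
  have h2 : ∀ y : ZMod L, (x = y - (m : ZMod L)) = (y = x + (m : ZMod L)) := by
    intro y; apply propext
    constructor
    · intro h; rw [h]; ring
    · intro h; rw [h]; ring
  simp only [h1, h2, mul_add, add_mul, ite_mul, mul_ite, zero_mul, mul_zero, one_mul, mul_one]
  rw [Finset.sum_add_distrib, Finset.sum_ite_eq' Finset.univ (x - (m : ZMod L)),
    Finset.sum_ite_eq' Finset.univ (x + (m : ZMod L))]
  simp

/-- Quasi-periodicity of the plane wave with momentum `k = 2πj/L`. -/
lemma planewave_shift (L : ℕ) [NeZero L] (j : ℤ) (k : ℝ) (hk : k = 2 * Real.pi * j / L)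
    (x : ZMod L) (s : ℤ) :
    Complex.exp (Complex.I * k * (((x + (s : ZMod L)).val : ℕ) : ℂ)) =
      Complex.exp (Complex.I * k * ((x.val : ℕ) : ℂ)) * Complex.exp (Complex.I * k * s) := by
  have hL : (L : ℝ) ≠ 0 := Nat.cast_ne_zero.2 (NeZero.ne L)
  have hdvd : (L : ℤ) ∣ (((x + (s : ZMod L)).val : ℤ) - ((x.val : ℤ) + s)) := by
    rw [← ZMod.intCast_zmod_eq_zero_iff_dvd]
    push_cast
    simp [ZMod.natCast_val, ZMod.intCast_cast, ZMod.cast_id]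
  obtain ⟨c, hc⟩ := hdvd
  have hval : (((x + (s : ZMod L)).val : ℕ) : ℂ) = ((x.val : ℕ) : ℂ) + s + L * c := by
    have : ((x + (s : ZMod L)).val : ℤ) = ((x.val : ℤ) + s) + L * c := by linarith [hc]
    exact_mod_cast congrArg (Int.cast : ℤ → ℂ) this
  rw [hval]
  rw [mul_add, mul_add, Complex.exp_add, Complex.exp_add]
  have h1 : Complex.exp (Complex.I * k * (L * c)) = 1 := by
    have : Complex.I * k * (L * c) = (j * c) * (2 * Real.pi * Complex.I) := by
      have hLC : (L : ℂ) ≠ 0 := Nat.cast_ne_zero.2 (NeZero.ne L)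
      rw [hk]; push_cast; field_simp
    rw [this]
    exact_mod_cast Complex.exp_int_mul_two_pi_mul_I (j * c)
  rw [h1, mul_one]

/-- For the dissipative ladder under PBC, the plane-wave state
`ψ = (1/√L) ∑_x e^{ikx}|x,A⟩` supported on the A chain is an eigenstate of the full
Hamiltonian with real eigenvalue `E = t_p cos(k - φ)` if and only if the connection
condition `∑_{m=0}^n t_m cos(mk) = 0` holds, where `k = 2πj/L`. -/
theorem stmt7 (L n : ℕ) [NeZero L] (tp φ : ℝ) (t : ℕ → ℝ) (γ : ZMod L → ℝ)
    (hγ : ∀ x, 0 < γ x) (j : ℤ) (k : ℝ) (hk : k = 2 * Real.pi * j / L)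
    (ψ : ZMod L × Bool → ℂ)
    (hψ : ψ = fun p => if p.2 = false then
        (1 / Real.sqrt L : ℝ) * Complex.exp (Complex.I * k * (p.1.val : ℕ)) else 0) :
    (ladderH L n tp φ t γ).mulVec ψ = ((tp * Real.cos (k - φ) : ℝ) : ℂ) • ψ ↔
      ∑ m ∈ Finset.range (n + 1), t m * Real.cos (m * k) = 0 := by
  set c : ℂ := ((1 / Real.sqrt L : ℝ) : ℂ) with hc
  set e : ZMod L → ℂ := fun x => Complex.exp (Complex.I * k * ((x.val : ℕ) : ℂ)) with he
  set v : ZMod L → ℂ := fun y => c * e y with hv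
  have hψv : ψ = fun p => if p.2 = false then v p.1 else 0 := hψ
  have hcne : c ≠ 0 := by
    rw [hc]
    have hL0 : (0 : ℝ) < L := Nat.cast_pos.2 (Nat.pos_of_ne_zero (NeZero.ne L))
    have : Real.sqrt L ≠ 0 := ne_of_gt (Real.sqrt_pos.2 hL0)
    simpa using this
  have hene : ∀ x, e x ≠ 0 := fun x => Complex.exp_ne_zero _
  have key : ∀ (x : ZMod L) (s : ℤ),
      e (x + (s : ZMod L)) = e x * Complex.exp (Complex.I * k * s) :=
    fun x s => planewave_shift L j k hk x s
  -- the A-row eigenvalue equation always holds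
  have hA : ∀ x : ZMod L, (ladderH L n tp φ t γ).mulVec ψ (x, false) =
      ((tp * Real.cos (k - φ) : ℝ) : ℂ) * v x := by
    intro x
    rw [ladderH_mulVec_A L n tp φ t γ v ψ hψv x]
    have hm1 : x - 1 = x + ((-1 : ℤ) : ZMod L) := by push_cast; ring
    have hp1 : x + 1 = x + ((1 : ℤ) : ZMod L) := by push_cast; ring
    simp only [hv]
    rw [hm1, hp1, key x (-1), key x 1]
    have hscal : (tp / 2 : ℂ) * Complex.exp (Complex.I * φ)
          * Complex.exp (Complex.I * k * ((-1 : ℤ) : ℂ))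
        + (tp / 2 : ℂ) * Complex.exp (-Complex.I * φ)
          * Complex.exp (Complex.I * k * ((1 : ℤ) : ℂ))
        = ((tp * Real.cos (k - φ) : ℝ) : ℂ) := by
      have h1 : Complex.exp (Complex.I * φ) * Complex.exp (Complex.I * k * ((-1 : ℤ) : ℂ))
          = Complex.exp (-(k - φ : ℂ) * Complex.I) := by
        rw [← Complex.exp_add]; congr 1; push_cast; ring
      have h2 : Complex.exp (-Complex.I * φ) * Complex.exp (Complex.I * k * ((1 : ℤ) : ℂ))
          = Complex.exp ((k - φ : ℂ) * Complex.I) := by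
        rw [← Complex.exp_add]; congr 1; push_cast; ring
      have hcos : ((tp * Real.cos (k - φ) : ℝ) : ℂ)
          = (tp : ℂ) * ((Complex.exp ((k - φ : ℂ) * Complex.I)
              + Complex.exp (-(k - φ : ℂ) * Complex.I)) / 2) := by
        push_cast
        rw [Complex.cos]
      rw [hcos]
      linear_combination (tp / 2 : ℂ) * h1 + (tp / 2 : ℂ) * h2
    calc (tp / 2 : ℂ) * Complex.exp (Complex.I * φ)
            * (c * (e x * Complex.exp (Complex.I * k * ((-1 : ℤ) : ℂ))))
          + (tp / 2 : ℂ) * Complex.exp (-Complex.I * φ)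
            * (c * (e x * Complex.exp (Complex.I * k * ((1 : ℤ) : ℂ))))
        = ((tp / 2 : ℂ) * Complex.exp (Complex.I * φ)
              * Complex.exp (Complex.I * k * ((-1 : ℤ) : ℂ))
            + (tp / 2 : ℂ) * Complex.exp (-Complex.I * φ)
              * Complex.exp (Complex.I * k * ((1 : ℤ) : ℂ))) * (c * e x) := by ring
      _ = ((tp * Real.cos (k - φ) : ℝ) : ℂ) * (c * e x) := by rw [hscal]
  -- the B-row value
  have hB : ∀ x : ZMod L, (ladderH L n tp φ t γ).mulVec ψ (x, true) =
      c * e x * ∑ m ∈ Finset.range (n + 1), (t m : ℂ) * Complex.cos ((m : ℂ) * (k : ℂ)) := by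
    intro x
    rw [ladderH_mulVec_B L n tp φ t γ v ψ hψv x]
    rw [Finset.mul_sum]
    refine Finset.sum_congr rfl fun m _ => ?_
    have hm : x - (m : ZMod L) = x + ((-(m : ℤ) : ℤ) : ZMod L) := by push_cast; ring
    have hp : x + (m : ZMod L) = x + (((m : ℤ) : ℤ) : ZMod L) := by push_cast; ring
    simp only [hv]
    rw [hm, hp, key x (-(m : ℤ)), key x ((m : ℤ))]
    have h1 : Complex.exp (Complex.I * (k : ℂ) * ((-(m : ℤ) : ℤ) : ℂ))
        = Complex.exp (-((m : ℂ) * (k : ℂ)) * Complex.I) := by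
      congr 1; push_cast; ring
    have h2 : Complex.exp (Complex.I * (k : ℂ) * (((m : ℤ) : ℤ) : ℂ))
        = Complex.exp (((m : ℂ) * (k : ℂ)) * Complex.I) := by
      congr 1; push_cast; ring
    rw [h1, h2, Complex.cos]
    ring
  have hψtrue : ∀ x : ZMod L, ψ (x, true) = 0 := by
    intro x; rw [hψ]; simp
  have hψfalse : ∀ x : ZMod L, ψ (x, false) = v x := by
    intro x; rw [hψv]; simp
  have hsum : (((∑ m ∈ Finset.range (n + 1), t m * Real.cos (m * k)) : ℝ) : ℂ)
      = ∑ m ∈ Finset.range (n + 1), (t m : ℂ) * Complex.cos ((m : ℂ) * (k : ℂ)) := by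
    push_cast
    rfl
  constructor
  · intro h
    have h0 := congrFun h ((0 : ZMod L), true)
    rw [hB 0] at h0
    simp only [Pi.smul_apply, smul_eq_mul, hψtrue 0, mul_zero] at h0
    have hS : (∑ m ∈ Finset.range (n + 1), (t m : ℂ) * Complex.cos ((m : ℂ) * (k : ℂ))) = 0 := by
      rcases mul_eq_zero.1 h0 with h' | h'
      · rcases mul_eq_zero.1 h' with h'' | h''
        · exact absurd h'' hcne
        · exact absurd h'' (hene 0)
      · exact h'
    rw [← hsum] at hS
    exact_mod_cast hS
  · intro h
    funext p
    obtain ⟨x, b⟩ := p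
    cases b
    · rw [hA x]
      simp only [Pi.smul_apply, smul_eq_mul, hψfalse x]
    · rw [hB x, ← hsum, h]
      simp only [Pi.smul_apply, smul_eq_mul, hψtrue x]
      simp
end

section
/- With m(t_2) denoting the minimum over k of h_x(k) = t_0 + t_1 cos k + t_2 cos 2k (for fixed t_0, t_1 > 0 and varying t_2 > 0), the maximum of m(t_2) over t_2 > 0 equals t_0 - t_1/√2 and is attained at t_2 = t_1/(2√2). Consequently, if t_0 ≤ t_1/√2, then for every t_2 > 0 there exists a real k with h_x(k) ≤ 0. -/
/-!
The upper branch is `t₀ - (t₁²/(8t₂) + t₂)`, and by AM-GM `t₁²/(8t₂) + t₂ ≥ t₁/√2` with equality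
at `t₂ = t₁/(2√2) > t₁/4`; the lower branch stays below `t₀ - t₁/√2` because `1/√2 ≤ 3/4`.
The minimum is attained, at `k = π` or at `cos k = -t₁/(4t₂)`, so `m(t₂) ≤ t₀ - t₁/√2 ≤ 0` yields a `k` with `h_x(k) ≤ 0`.
-/

open Real

noncomputable section

/-- The minimum of `t₀ + t₁ cos k + t₂ cos 2k = t₀ - t₂ + t₁ c + 2 t₂ c²` (`c = cos k`) over
`c ∈ [-1, 1]`, for `t₁ ≥ 0` and `t₂ > 0`: the vertex `c = -t₁/(4t₂)` if it lies in `[-1, 1]`,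
otherwise `c = -1`. -/
def cosMin (t0 t1 t2 : ℝ) : ℝ :=
  if t2 ≤ t1 / 4 then t0 - t1 + t2 else t0 - t1 ^ 2 / (8 * t2) - t2

lemma div_sqrt_two_le_three_quarters_mul {t1 : ℝ} (ht1 : 0 ≤ t1) : t1 / √2 ≤ 3 / 4 * t1 := by
  have hs : 4 / 3 ≤ √2 := le_sqrt_of_sq_le (by norm_num)
  rw [div_le_iff₀ (by positivity)]
  nlinarith

lemma div_sq_add_ge {t1 t2 : ℝ} (ht2 : 0 < t2) : t1 / √2 ≤ t1 ^ 2 / (8 * t2) + t2 := by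
  have hs : √2 ^ 2 = 2 := sq_sqrt (by norm_num)
  rw [div_add' _ _ _ (by positivity), le_div_iff₀ (by positivity),
    show t1 / √2 = √2 * t1 / 2 by field_simp; linear_combination -t1 * hs]
  linear_combination sq_nonneg (t1 - 2 * √2 * t2) + 4 * t2 ^ 2 * hs

lemma div_sq_add_eq (t1 : ℝ) :
    t1 ^ 2 / (8 * (t1 / (2 * √2))) + t1 / (2 * √2) = t1 / √2 := by
  rcases eq_or_ne t1 0 with rfl | ht1
  · simp
  have hs : √2 ^ 2 = 2 := sq_sqrt (by norm_num)
  field_simp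
  linear_combination 4 * hs

lemma quarter_lt_div_two_sqrt_two {t1 : ℝ} (ht1 : 0 < t1) : t1 / 4 < t1 / (2 * √2) := by
  have : 2 * √2 < 4 := by nlinarith [sq_sqrt (show (0 : ℝ) ≤ 2 by norm_num), sqrt_nonneg 2]
  exact div_lt_div_of_pos_left ht1 (by positivity) this

lemma cosMin_le {t0 t1 t2 : ℝ} (ht1 : 0 ≤ t1) (ht2 : 0 < t2) :
    cosMin t0 t1 t2 ≤ t0 - t1 / √2 := by
  unfold cosMin
  split_ifs with h
  · linarith [div_sqrt_two_le_three_quarters_mul ht1]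
  · linarith [div_sq_add_ge (t1 := t1) ht2]

lemma cosMin_div_two_sqrt_two {t0 t1 : ℝ} (ht1 : 0 < t1) :
    cosMin t0 t1 (t1 / (2 * √2)) = t0 - t1 / √2 := by
  rw [cosMin, if_neg (quarter_lt_div_two_sqrt_two ht1).not_ge]
  linarith [div_sq_add_eq t1]

lemma exists_cos_eq_of_abs_le {t0 t1 t2 : ℝ} (ht2 : 0 < t2) (h : |t1| ≤ 4 * t2) :
    ∃ k, t0 + t1 * cos k + t2 * cos (2 * k) = t0 - t1 ^ 2 / (8 * t2) - t2 := by
  have hc : |-t1 / (4 * t2)| ≤ 1 := by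
    rw [abs_div, abs_neg, abs_of_pos (by positivity : (0 : ℝ) < 4 * t2)]
    exact div_le_one_of_le₀ h (by positivity)
  obtain ⟨hlo, hhi⟩ := abs_le.mp hc
  refine ⟨arccos (-t1 / (4 * t2)), ?_⟩
  rw [cos_two_mul, cos_arccos hlo hhi]
  field_simp
  ring

lemma exists_cos_eq_cosMin {t0 t1 t2 : ℝ} (ht1 : 0 ≤ t1) :
    ∃ k, t0 + t1 * cos k + t2 * cos (2 * k) = cosMin t0 t1 t2 := by
  unfold cosMin
  split_ifs with h
  · exact ⟨π, by rw [cos_pi, cos_two_pi]; ring⟩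
  · exact exists_cos_eq_of_abs_le (by linarith) (by rw [abs_of_nonneg ht1]; linarith)

end

theorem stmt11_general (t0 t1 : ℝ) (ht1 : 0 < t1)
    (m : ℝ → ℝ)
    (hm : m = fun t2 => if t2 ≤ t1 / 4 then t0 - t1 + t2 else t0 - t1 ^ 2 / (8 * t2) - t2) :
    (∀ t2 : ℝ, 0 < t2 → m t2 ≤ t0 - t1 / Real.sqrt 2) ∧
    m (t1 / (2 * Real.sqrt 2)) = t0 - t1 / Real.sqrt 2 ∧
    (t0 ≤ t1 / Real.sqrt 2 → ∀ t2 : ℝ, 0 < t2 →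
      ∃ k : ℝ, t0 + t1 * Real.cos k + t2 * Real.cos (2 * k) ≤ 0) := by
  obtain rfl : m = cosMin t0 t1 := hm
  refine ⟨fun t2 ht2 => cosMin_le ht1.le ht2, cosMin_div_two_sqrt_two ht1, ?_⟩
  intro hle t2 ht2
  obtain ⟨k, hk⟩ := exists_cos_eq_cosMin (t0 := t0) (t2 := t2) ht1.le
  exact ⟨k, by linarith [cosMin_le (t0 := t0) ht1.le ht2]⟩

/-- With `m(t_2)` the minimum over `k` of
`h_x(k) = t_0 + t_1 cos k + t_2 cos 2k` (equal to `t_0 - t_1 + t_2` for `t_2 ≤ t_1/4`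
and `t_0 - t_1²/(8t_2) - t_2` for `t_2 > t_1/4`), the maximum of `m(t_2)` over `t_2 > 0`
equals `t_0 - t_1/√2`, attained at `t_2 = t_1/(2√2)`. Consequently, if `t_0 ≤ t_1/√2`,
then for every `t_2 > 0` there exists a real `k` with `h_x(k) ≤ 0`. -/
theorem stmt11 (t0 t1 : ℝ) (ht0 : 0 < t0) (ht1 : 0 < t1)
    (m : ℝ → ℝ)
    (hm : m = fun t2 => if t2 ≤ t1 / 4 then t0 - t1 + t2 else t0 - t1 ^ 2 / (8 * t2) - t2) :
    (∀ t2 : ℝ, 0 < t2 → m t2 ≤ t0 - t1 / Real.sqrt 2) ∧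
    m (t1 / (2 * Real.sqrt 2)) = t0 - t1 / Real.sqrt 2 ∧
    (t0 ≤ t1 / Real.sqrt 2 → ∀ t2 : ℝ, 0 < t2 →
      ∃ k : ℝ, t0 + t1 * Real.cos k + t2 * Real.cos (2 * k) ≤ 0) :=
  stmt11_general t0 t1 ht1 m hm
end

section
/- For the Bloch Hamiltonian H(k) = (t_0 + t_1 cos k) σ_x + (t_p cos(k-φ) + iγ/2) σ_z - (iγ/2) I, the real eigenvalues (IGC energies) occur exactly at momenta k with cos k = -t_0/t_1 (requiring t_0 ≤ t_1), and the corresponding energies are E = (t_p/t_1)(-t_0 cos φ ± sqrt(t_1² - t_0²) sin φ). -/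
open Complex Matrix

lemma key14 (a b γ E : ℝ) (hγ : 0 < γ) :
    (∃ v : Fin 2 → ℂ, v ≠ 0 ∧
      (!![(b:ℂ), a; a, -b - Complex.I * γ]).mulVec v = (E : ℂ) • v) ↔
    (a = 0 ∧ E = b) := by
  constructor
  · rintro ⟨v, hv, hm⟩
    have e0 := congr_fun hm 0
    have e1 := congr_fun hm 1
    simp [mulVec, dotProduct, Fin.sum_univ_two] at e0 e1
    set D : ℂ := ((b:ℂ) - E) * (-b - Complex.I * γ - E) - a ^ 2 with hDdef
    have hD0 : D * v 0 = 0 := by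
      linear_combination (-(b:ℂ) - Complex.I * γ - E) * e0 - (a : ℂ) * e1
    have hD1 : D * v 1 = 0 := by
      linear_combination ((b:ℂ) - E) * e1 - (a : ℂ) * e0
    have hD : D = 0 := by
      rcases mul_eq_zero.1 hD0 with h | h0
      · exact h
      rcases mul_eq_zero.1 hD1 with h | h1
      · exact h
      exact absurd (funext fun i => by fin_cases i <;> assumption) hv
    have hD' : ((((b - E) * (-b - E) - a ^ 2 : ℝ) : ℂ) + ((γ * (E - b) : ℝ) : ℂ) * Complex.I) = 0 := by
      rw [← hD]; push_cast; ring
    rw [Complex.ext_iff] at hD'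
    simp only [Complex.add_re, Complex.add_im, Complex.mul_re, Complex.mul_im,
      Complex.ofReal_re, Complex.ofReal_im, Complex.I_re, Complex.I_im,
      Complex.zero_re, Complex.zero_im, mul_zero, mul_one, zero_mul, add_zero,
      sub_zero, zero_add, zero_sub, neg_eq_zero] at hD'
    obtain ⟨h1, h2⟩ := hD'
    have hEb : E = b := by
      rcases mul_eq_zero.1 h2 with h | h
      · exact absurd h (ne_of_gt hγ)
      · linarith
    have ha2 : a ^ 2 = 0 := by rw [hEb] at h1; nlinarith
    exact ⟨pow_eq_zero_iff two_ne_zero |>.1 ha2, hEb⟩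
  · rintro ⟨ha, hE⟩
    refine ⟨![1, 0], ?_, ?_⟩
    · simp only [ne_eq, funext_iff, not_forall]
      exact ⟨0, by norm_num⟩
    · funext i
      fin_cases i <;> simp [mulVec, dotProduct, Fin.sum_univ_two, ha, hE]

/-- For the Bloch Hamiltonian
`H(k) = (t_0 + t_1 cos k) σ_x + (t_p cos(k-φ) + iγ/2) σ_z - (iγ/2) I` with
`0 < t_0 ≤ t_1`, `γ > 0`, the real eigenvalues (IGC energies) occur exactly at momenta
`k` with `cos k = -t_0/t_1`, and the corresponding energies are
`E = (t_p/t_1)(-t_0 cos φ ± sqrt(t_1² - t_0²) sin φ)`. -/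
theorem stmt14 (t0 t1 tp φ γ : ℝ) (ht0 : 0 < t0) (ht01 : t0 ≤ t1) (hγ : 0 < γ)
    (σx σz Id : Matrix (Fin 2) (Fin 2) ℂ)
    (hσx : σx = !![0, 1; 1, 0]) (hσz : σz = !![1, 0; 0, -1]) (hId : Id = 1)
    (H : ℝ → Matrix (Fin 2) (Fin 2) ℂ)
    (hH : H = fun k => ((t0 + t1 * Real.cos k : ℝ) : ℂ) • σx
        + (((tp * Real.cos (k - φ) : ℝ) : ℂ) + Complex.I * γ / 2) • σz
        - (Complex.I * γ / 2) • Id) :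
    (∀ k : ℝ, (∃ E : ℝ, ∃ v : Fin 2 → ℂ, v ≠ 0 ∧ (H k).mulVec v = (E : ℂ) • v) ↔
        Real.cos k = -t0 / t1) ∧
    (∀ k : ℝ, ∀ E : ℝ, (∃ v : Fin 2 → ℂ, v ≠ 0 ∧ (H k).mulVec v = (E : ℂ) • v) →
        E = (tp / t1) * (-t0 * Real.cos φ + Real.sqrt (t1 ^ 2 - t0 ^ 2) * Real.sin φ) ∨
        E = (tp / t1) * (-t0 * Real.cos φ - Real.sqrt (t1 ^ 2 - t0 ^ 2) * Real.sin φ)) := by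
  have ht1 : 0 < t1 := lt_of_lt_of_le ht0 ht01
  have hHk : ∀ k : ℝ, H k =
      !![((tp * Real.cos (k - φ) : ℝ) : ℂ), ((t0 + t1 * Real.cos k : ℝ) : ℂ);
        ((t0 + t1 * Real.cos k : ℝ) : ℂ), -(tp * Real.cos (k - φ) : ℝ) - Complex.I * γ] := by
    intro k
    subst hH hσx hσz hId
    ext i j
    fin_cases i <;> fin_cases j <;>
      simp [Matrix.one_apply] <;> ring
  have hkey : ∀ (k E : ℝ),
      (∃ v : Fin 2 → ℂ, v ≠ 0 ∧ (H k).mulVec v = (E : ℂ) • v) ↔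
      (t0 + t1 * Real.cos k = 0 ∧ E = tp * Real.cos (k - φ)) := by
    intro k E
    rw [hHk k]
    exact key14 (t0 + t1 * Real.cos k) (tp * Real.cos (k - φ)) γ E hγ
  constructor
  · intro k
    constructor
    · rintro ⟨E, hv⟩
      have := ((hkey k E).1 hv).1
      field_simp
      linarith
    · intro hc
      refine ⟨tp * Real.cos (k - φ), (hkey k _).2 ⟨?_, rfl⟩⟩
      rw [hc]; field_simp; ring
  · intro k E hv
    obtain ⟨ha, hE⟩ := (hkey k E).1 hv
    have hc : Real.cos k = -t0 / t1 := by field_simp; linarith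
    have hs2 : Real.sin k ^ 2 = (t1 ^ 2 - t0 ^ 2) / t1 ^ 2 := by
      have := Real.sin_sq_add_cos_sq k
      rw [hc] at this
      field_simp at this ⊢
      nlinarith
    have hsq : Real.sqrt ((t1 ^ 2 - t0 ^ 2) / t1 ^ 2) = Real.sqrt (t1 ^ 2 - t0 ^ 2) / t1 := by
      rw [Real.sqrt_div (by nlinarith), Real.sqrt_sq ht1.le]
    have hEexp : E = tp * (Real.cos k * Real.cos φ + Real.sin k * Real.sin φ) := by
      rw [hE, Real.cos_sub]
    rcases le_or_gt 0 (Real.sin k) with hs | hs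
    · left
      have : Real.sin k = Real.sqrt (t1 ^ 2 - t0 ^ 2) / t1 := by
        rw [← hsq, ← hs2, Real.sqrt_sq hs]
      rw [hEexp, this, hc]
      field_simp
    · right
      have : Real.sin k = -(Real.sqrt (t1 ^ 2 - t0 ^ 2) / t1) := by
        rw [← hsq, ← hs2]
        rw [show Real.sin k ^ 2 = (-Real.sin k) ^ 2 by ring, Real.sqrt_sq (by linarith)]
        ring
      rw [hEexp, this, hc]
      field_simp
      ring
end

section
/- Let X = i H* where H = A - iD is the dissipative ladder Hamiltonian under PBC (A Hermitian, D ≥ 0 diagonal with support on B sites). If the connection condition ∑_{m=0}^n t_m cos(mk) = 0 holds for some k ∈ (2π/L)ℤ, then the vector v with components v_{x,A} = e^{-ikx}, v_{x,B} = 0 is an eigenvector of X with purely imaginary eigenvalue i t_p cos(k - φ); hence the damping matrix has a vanishing Liouvillian gap contribution from this mode. -/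
open Complex Matrix Finset

theorem keylem (L : ℕ) [NeZero L] (k : ℝ) (j : ℤ) (hkL : k * L = 2 * Real.pi * j)
    (x : ZMod L) (m : ℤ) :
    Complex.exp (-Complex.I * k * ((x + (m : ZMod L)).val : ℕ)) =
      Complex.exp (-Complex.I * k * (x.val : ℕ)) * Complex.exp (-Complex.I * k * m) := by
  have h1 : ((((x + (m : ZMod L)).val : ℤ) : ZMod L)) = (((x.val : ℤ) + m : ℤ) : ZMod L) := by
    push_cast [ZMod.natCast_val, ZMod.intCast_cast, ZMod.cast_id]; rfl
  rw [ZMod.intCast_eq_intCast_iff] at h1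
  obtain ⟨c, hc⟩ := h1.dvd
  have hb' : (x.val : ℤ) + m = ((x + (m : ZMod L)).val : ℤ) + L * c := by linarith
  have hb : ((x.val : ℕ) : ℂ) + (m : ℂ) = (((x + (m : ZMod L)).val : ℕ) : ℂ) + (L : ℂ) * c := by
    exact_mod_cast congrArg (Int.cast : ℤ → ℂ) hb'
  have hkLC : (k : ℂ) * (L : ℂ) = 2 * (Real.pi : ℂ) * (j : ℂ) := by exact_mod_cast hkL
  rw [← Complex.exp_add]
  have h2 : (-Complex.I * k * (((x+(m:ZMod L)).val:ℕ):ℂ))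
      = -Complex.I * k * ((x.val:ℕ):ℂ) + -Complex.I * k * m + ((c * j : ℤ) : ℂ) * (2 * (Real.pi:ℂ) * Complex.I) := by
    push_cast
    linear_combination (Complex.I * (k:ℂ)) * hb + ((c : ℂ) * Complex.I) * hkLC
  rw [h2, Complex.exp_add, Complex.exp_int_mul_two_pi_mul_I, mul_one]

theorem coslem (a : ℝ) :
    Complex.exp (Complex.I * a) + Complex.exp (-Complex.I * a) = 2 * ((Real.cos a : ℝ) : ℂ) := by
  rw [Complex.ofReal_cos, Complex.cos]
  rw [show Complex.I * (a:ℂ) = (a:ℂ) * Complex.I from mul_comm _ _,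
      show -Complex.I * (a:ℂ) = -((a:ℂ)*Complex.I) from by ring]
  ring

/-- Let `X = i H*` be the damping matrix of the dissipative ladder under
PBC. If the connection condition `∑_{m=0}^n t_m cos(mk) = 0` holds for `k = 2πj/L`, then
the vector `v` with `v_{x,A} = e^{-ikx}`, `v_{x,B} = 0` is an eigenvector of `X` with
purely imaginary eigenvalue `i t_p cos(k - φ)`; the damping matrix has a vanishing
Liouvillian gap contribution from this mode. -/
theorem stmt17 (L n : ℕ) [NeZero L] (tp φ : ℝ) (t : ℕ → ℝ) (γ : ZMod L → ℝ)
    (hγ : ∀ x, 0 < γ x) (j : ℤ) (k : ℝ) (hk : k = 2 * Real.pi * j / L)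
    (X : Matrix (ZMod L × Bool) (ZMod L × Bool) ℂ)
    (hX : X = Complex.I • (ladderH L n tp φ t γ).map (starRingEnd ℂ))
    (v : ZMod L × Bool → ℂ)
    (hv : v = fun p => if p.2 = false then
        Complex.exp (-Complex.I * k * (p.1.val : ℕ)) else 0)
    (hconn : ∑ m ∈ Finset.range (n + 1), t m * Real.cos (m * k) = 0) :
    v ≠ 0 ∧
    X.mulVec v = (Complex.I * (tp * Real.cos (k - φ) : ℝ)) • v ∧
    (Complex.I * (tp * Real.cos (k - φ) : ℝ)).re = 0 := by
  have hL : (L : ℝ) ≠ 0 := Nat.cast_ne_zero.mpr (NeZero.ne L)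
  have hkL : k * L = 2 * Real.pi * j := by rw [hk]; field_simp
  refine ⟨?_, ?_, by rw [Complex.mul_re, Complex.I_re, Complex.I_im, Complex.ofReal_im]; ring⟩
  · intro h
    simpa [hv] using congrFun h (0, false)
  · subst hX hv
    funext p
    obtain ⟨x, b⟩ := p
    rw [Matrix.mulVec]
    simp only [dotProduct, Fintype.sum_prod_type, Fintype.sum_bool,
      Matrix.smul_apply, Matrix.map_apply, Pi.smul_apply, smul_eq_mul]
    cases b
    · -- A site
      have hrw : ∀ y : ZMod L, (x = y + 1) = (y = x - 1) := fun y => by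
        rw [eq_comm, eq_sub_iff_add_eq]; exact propext eq_comm
      have hc : Complex.exp (Complex.I * k) * Complex.exp (-(Complex.I * φ))
          + Complex.exp (-(Complex.I * k)) * Complex.exp (Complex.I * φ)
          = 2 * ((Real.cos (k - φ) : ℝ) : ℂ) := by
        have h := coslem (k - φ)
        rw [show Complex.I * ((k - φ : ℝ) : ℂ) = Complex.I * k + -(Complex.I * φ) from by
              push_cast; ring,
            show -Complex.I * ((k - φ : ℝ) : ℂ) = -(Complex.I * k) + Complex.I * φ from by
              push_cast; ring,
            Complex.exp_add, Complex.exp_add] at h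
        exact h
      have key1' : Complex.exp (-(Complex.I * k * ((x - 1).val : ℕ)))
          = Complex.exp (-(Complex.I * k * (x.val : ℕ))) * Complex.exp (Complex.I * k) := by
        have h := keylem L k j hkL x (-1)
        rw [show ((-1 : ℤ) : ZMod L) = -1 from by push_cast; ring,
            show x + (-1 : ZMod L) = x - 1 from by ring,
            show ((-1 : ℤ) : ℂ) = -1 from by push_cast; ring,
            show -Complex.I * (k : ℂ) * (-1 : ℂ) = Complex.I * k from by ring] at h
        simpa [neg_mul] using h
      have key2' : Complex.exp (-(Complex.I * k * ((x + 1).val : ℕ)))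
          = Complex.exp (-(Complex.I * k * (x.val : ℕ))) * Complex.exp (-(Complex.I * k)) := by
        have h := keylem L k j hkL x 1
        rw [show ((1 : ℤ) : ZMod L) = 1 from by push_cast; ring,
            show ((1 : ℤ) : ℂ) = 1 from by push_cast; ring,
            show -Complex.I * (k : ℂ) * (1 : ℂ) = -(Complex.I * k) from by ring] at h
        simpa [neg_mul] using h
      simp only [ladderH, Bool.false_eq_true, if_true, if_false, mul_zero, add_zero, reduceIte,
        zero_add, hrw, map_add, apply_ite (starRingEnd ℂ), map_zero, _root_.map_mul, map_div₀,
        Complex.conj_ofReal, ← Complex.exp_conj, Complex.conj_I, map_ofNat, neg_mul, map_neg,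
        neg_neg, mul_add, add_mul, ite_mul, mul_ite, zero_mul, Finset.sum_add_distrib,
        Finset.sum_ite_eq', Finset.mem_univ, if_true]
      simp only [reduceIte, Bool.true_eq_false, if_false, Finset.sum_const_zero, zero_add]
      rw [key1', key2', Complex.ofReal_mul]
      linear_combination (Complex.I * (tp : ℂ) / 2
        * Complex.exp (-(Complex.I * k * ((x.val : ℕ) : ℂ)))) * hc
    · have hrw1 : ∀ (y : ZMod L) (m : ℕ), (x = y + (m : ZMod L)) = (y = x - (m : ZMod L)) :=
        fun y m => by rw [eq_comm, eq_sub_iff_add_eq]; exact propext eq_comm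
      have hrw2 : ∀ (y : ZMod L) (m : ℕ), (x = y - (m : ZMod L)) = (y = x + (m : ZMod L)) :=
        fun y m => by rw [eq_sub_iff_add_eq]; exact propext eq_comm
      simp only [ladderH, Bool.false_eq_true, reduceIte, Bool.true_eq_false, if_false, if_true,
        mul_zero, zero_mul, add_zero, zero_add, Finset.sum_const_zero, hrw1, hrw2,
        map_sum, _root_.map_mul, map_add, map_div₀, apply_ite (starRingEnd ℂ), map_zero, _root_.map_one,
        Complex.conj_ofReal, map_ofNat, Finset.mul_sum, Finset.sum_mul, mul_one,
        ite_mul, mul_ite, mul_add, add_mul, Finset.sum_add_distrib,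
        Finset.sum_ite_eq', Finset.mem_univ, if_true]
      have hswap : ∀ f : ZMod L → ℕ → ℂ,
          (∑ y : ZMod L, ∑ m ∈ Finset.range (n + 1), f y m)
            = ∑ m ∈ Finset.range (n + 1), ∑ y : ZMod L, f y m := fun f => Finset.sum_comm
      rw [hswap, hswap]
      simp only [Finset.sum_ite_eq', Finset.mem_univ, if_true]
      rw [← Finset.sum_add_distrib]
      have hterm : ∀ m ∈ Finset.range (n + 1),
          Complex.I * ((t m : ℂ) / 2) * Complex.exp (-Complex.I * k * (((x - (m : ZMod L)).val : ℕ) : ℂ))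
            + Complex.I * ((t m : ℂ) / 2) * Complex.exp (-Complex.I * k * (((x + (m : ZMod L)).val : ℕ) : ℂ))
          = Complex.I * Complex.exp (-Complex.I * k * ((x.val : ℕ) : ℂ))
              * ((t m * Real.cos ((m : ℝ) * k) : ℝ) : ℂ) := by
        intro m _
        have h1 := keylem L k j hkL x (-(m : ℤ))
        have h2 := keylem L k j hkL x (m : ℤ)
        rw [show (((-(m : ℤ) : ℤ)) : ZMod L) = -(m : ZMod L) from by push_cast; ring,
            show x + -(m : ZMod L) = x - (m : ZMod L) from by ring,
            show (((-(m : ℤ) : ℤ)) : ℂ) = -((m : ℕ) : ℂ) from by push_cast; ring,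
            show -Complex.I * (k : ℂ) * -((m : ℕ) : ℂ) = Complex.I * (((m : ℝ) * k : ℝ) : ℂ) from by
              push_cast; ring] at h1
        rw [show (((m : ℕ) : ℤ) : ZMod L) = (m : ZMod L) from by push_cast; ring,
            show (((m : ℕ) : ℤ) : ℂ) = ((m : ℕ) : ℂ) from by push_cast; ring,
            show -Complex.I * (k : ℂ) * ((m : ℕ) : ℂ) = -Complex.I * (((m : ℝ) * k : ℝ) : ℂ) from by
              push_cast; ring] at h2
        have hcm := coslem ((m : ℝ) * k)
        rw [h1, h2, Complex.ofReal_mul]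
        push_cast at hcm ⊢
        linear_combination (Complex.I * Complex.exp (-Complex.I * (k:ℂ) * ((x.val : ℕ) : ℂ))
          * ((t m : ℂ)) / 2) * hcm
      rw [Finset.sum_congr rfl hterm, ← Finset.mul_sum]
      have hs : (∑ m ∈ Finset.range (n + 1), ((t m * Real.cos ((m : ℝ) * k) : ℝ) : ℂ)) = 0 := by
        exact_mod_cast hconn
      rw [hs, mul_zero]
end
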